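/- arXiv:1507.03003 — 2 statements merged into one kernel-verified Lean document; each statement's English description precedes it below -/
import Mathlib

section
/- Let $\alpha > 0$, $\gamma > 0$, and let $m_I(-\lambda;\gamma)$ be the Stieltjes transform of the Marchenko-Pastur law with identity covariance, i.e., the positive solution of $\gamma\lambda m^2 + (1-\gamma+\lambda)m - 1 = 0$. Then for $\lambda^* = \gamma/\alpha^2$, the quantity $R^* = 1 + \gamma\, m_I(-\lambda^*;\gamma)$ equals $R^* = \tfrac{1}{2}\left[1 + \frac{\gamma-1}{\gamma}\alpha^2 + \sqrt{\left(1 - \frac{\gamma-1}{\gamma}\alpha^2\right)^2 + 4\alpha^2}\right]$. -/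
/-- Closed form for the optimal limiting predictive risk of ridge regression with
identity covariance: `R* = 1 + γ m_I(-λ*; γ)` with `λ* = γ/α²`. -/
theorem stmt_1 (α γ : ℝ) (hα : 0 < α) (hγ : 0 < γ)
    (m : ℝ) (hmpos : 0 < m)
    (hm : γ * (γ / α ^ 2) * m ^ 2 + (1 - γ + γ / α ^ 2) * m - 1 = 0) :
    1 + γ * m =
      (1 + (γ - 1) / γ * α ^ 2 +
        Real.sqrt ((1 - (γ - 1) / γ * α ^ 2) ^ 2 + 4 * α ^ 2)) / 2 := by
  have hα2 : (0:ℝ) < α ^ 2 := by positivity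
  have hγm : 0 < γ * m := mul_pos hγ hmpos
  have key : α ^ 2 * m * (γ - 1) = γ ^ 2 * m ^ 2 + γ * m - α ^ 2 := by
    field_simp at hm
    nlinarith [hm]
  have hs : (γ - 1) / γ * α ^ 2 * (γ * m) = γ ^ 2 * m ^ 2 + γ * m - α ^ 2 := by
    field_simp
    nlinarith [key]
  set S := (γ - 1) / γ * α ^ 2 with hS
  have hnn : 0 < 1 + 2 * (γ * m) - S := by
    nlinarith [hs, hα2, hγm, sq_nonneg (γ * m)]
  have hsq : (1 - S) ^ 2 + 4 * α ^ 2 = (1 + 2 * (γ * m) - S) ^ 2 := by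
    nlinarith [hs]
  rw [hsq, Real.sqrt_sq hnn.le]
  ring_nf
end

section
/- Let $\alpha > 0$, $\gamma \in (0,1)$, $0 < k_1 \le 1 \le k_2$, and define $\bar\Theta_{LDA} = \frac{\alpha^2 \sqrt{1-\gamma}}{\sqrt{\alpha^2 + \gamma}}$ and $\bar\Theta_{IR} = \frac{\alpha^2}{\sqrt{\alpha^2 + \gamma(k_1 + k_2 - k_1 k_2)}}$. Then $\bar\Theta_{LDA} < \bar\Theta_{IR}$ if and only if $\alpha^2 + 1 > (1-\gamma)(k_1 + k_2 - k_1 k_2)$. -/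
/-- Comparison of the worst-case margins of LDA and independence rules. -/
theorem stmt_11 (α γ k₁ k₂ : ℝ) (hα : 0 < α) (hγ0 : 0 < γ) (hγ1 : γ < 1)
    (h₁ : 0 < k₁) (h₂ : k₁ ≤ 1) (h₃ : 1 ≤ k₂) :
    α ^ 2 * Real.sqrt (1 - γ) / Real.sqrt (α ^ 2 + γ) <
        α ^ 2 / Real.sqrt (α ^ 2 + γ * (k₁ + k₂ - k₁ * k₂)) ↔
      α ^ 2 + 1 > (1 - γ) * (k₁ + k₂ - k₁ * k₂) := by
  have hK : 1 ≤ k₁ + k₂ - k₁ * k₂ := by nlinarith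
  have hA : (0:ℝ) < α ^ 2 + γ := by positivity
  have hB : (0:ℝ) < α ^ 2 + γ * (k₁ + k₂ - k₁ * k₂) := by nlinarith
  have hg : (0:ℝ) ≤ 1 - γ := by linarith
  rw [div_lt_div_iff₀ (Real.sqrt_pos.mpr hA) (Real.sqrt_pos.mpr hB),
    mul_assoc, mul_lt_mul_iff_right₀ (by positivity : (0:ℝ) < α ^ 2),
    ← Real.sqrt_mul hg, Real.sqrt_lt_sqrt_iff (by positivity)]
  constructor <;> intro h <;> nlinarith
end
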